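/- Suppose g, h : ℝⁿ → ℝ are convex, g differentiable, x* minimizes g + h, and for some λ > 0 and points x, ε with ε/λ ∈ ∇g(x) + ∂h(x - ε). Then g(x) + h(x) - (g(x*) + h(x*)) ≤ ⟨x - x*, ε/λ⟩ + ⟨ε, q - p⟩ for any q ∈ ∂h(x) and the specific p ∈ ∂h(x - ε) satisfying ε/λ = ∇g(x) + p. -/

import Mathlib

/-!
Add three subgradient inequalities: `g x - g x* ≤ ⟪∇g x, x - x*⟫`,
`h (x - ε) - h x* ≤ ⟪p, x - ε - x*⟫` and `h x - h (x - ε) ≤ ⟪q, ε⟫`. The right-hand sides sum to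
`⟪∇g x + p, x - x*⟫ + ⟪q - p, ε⟫`, and `∇g x + p = ε / λ`.
-/

open RealInnerProductSpace

/-- The subdifferential of a convex function. -/
def subdiff {n : ℕ} (h : EuclideanSpace ℝ (Fin n) → ℝ) (x : EuclideanSpace ℝ (Fin n)) :
    Set (EuclideanSpace ℝ (Fin n)) :=
  {p | ∀ y, h x + ⟪p, y - x⟫ ≤ h y}

theorem ConvexOn.add_fderiv_le {E : Type*} [NormedAddCommGroup E] [NormedSpace ℝ E]
    {s : Set E} {f : E → ℝ} {f' : E →L[ℝ] ℝ} {x y : E}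
    (hf : ConvexOn ℝ s f) (hx : x ∈ s) (hy : y ∈ s) (hf' : HasFDerivAt f f' x) :
    f x + f' (y - x) ≤ f y := by
  set φ : ℝ → ℝ := f ∘ AffineMap.lineMap x y
  have hφ : ConvexOn ℝ (Set.Icc 0 1) φ :=
    (hf.comp_affineMap _).subset (fun _ ht => hf.1.lineMap_mem hx hy ht) (convex_Icc 0 1)
  have hφ' : HasDerivAt φ (f' (y - x)) 0 := by
    have hf'0 : HasFDerivAt f f' (AffineMap.lineMap x y (0 : ℝ)) := by simpa using hf'
    exact hf'0.comp_hasDerivAt 0 AffineMap.hasDerivAt_lineMap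
  have hslope := hφ.le_slope_of_hasDerivAt (by simp) (by simp) one_pos hφ'
  simp only [φ, slope_def_field, Function.comp_apply, AffineMap.lineMap_apply_one,
    AffineMap.lineMap_apply_zero, sub_zero, div_one] at hslope
  linarith

theorem ConvexOn.mem_subdiff_of_hasGradientAt {n : ℕ} {g : EuclideanSpace ℝ (Fin n) → ℝ}
    {g' x : EuclideanSpace ℝ (Fin n)} (hg : ConvexOn ℝ Set.univ g) (hg' : HasGradientAt g g' x) :
    g' ∈ subdiff g x := fun y =>
  hg.add_fderiv_le (Set.mem_univ x) (Set.mem_univ y) hg'.hasFDerivAt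

theorem sub_le_inner_of_mem_subdiff {n : ℕ} {h : EuclideanSpace ℝ (Fin n) → ℝ}
    {x p : EuclideanSpace ℝ (Fin n)} (hp : p ∈ subdiff h x) (y : EuclideanSpace ℝ (Fin n)) :
    h x - h y ≤ ⟪p, x - y⟫ := by
  have := hp y
  rw [← neg_sub, inner_neg_right] at this
  linarith

theorem suboptimality_bound_general {n : ℕ}
    (g h : EuclideanSpace ℝ (Fin n) → ℝ)
    (g' : EuclideanSpace ℝ (Fin n) → EuclideanSpace ℝ (Fin n))
    (hg : ConvexOn ℝ Set.univ g)
    (hgdiff : ∀ x, HasGradientAt g (g' x) x)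
    (xs : EuclideanSpace ℝ (Fin n))
    (lam : ℝ)
    (x ε p q : EuclideanSpace ℝ (Fin n))
    (hp : p ∈ subdiff h (x - ε))
    (hpe : (lam⁻¹) • ε = g' x + p)
    (hq : q ∈ subdiff h x) :
    g x + h x - (g xs + h xs) ≤ ⟪x - xs, (lam⁻¹) • ε⟫ + ⟪ε, q - p⟫ := by
  have hgx := sub_le_inner_of_mem_subdiff (hg.mem_subdiff_of_hasGradientAt (hgdiff x)) xs
  have hhxε := sub_le_inner_of_mem_subdiff hp xs
  have hhx := sub_le_inner_of_mem_subdiff hq (x - ε)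
  have hsum : ⟪g' x, x - xs⟫ + ⟪p, x - ε - xs⟫ + ⟪q, x - (x - ε)⟫ =
      ⟪g' x + p, x - xs⟫ + ⟪q - p, ε⟫ := by
    simp only [sub_sub_cancel, inner_add_left, inner_sub_right, inner_sub_left]
    ring
  rw [real_inner_comm _ (x - xs), real_inner_comm _ ε, hpe]
  linarith

theorem suboptimality_bound {n : ℕ}
    (g h : EuclideanSpace ℝ (Fin n) → ℝ)
    (g' : EuclideanSpace ℝ (Fin n) → EuclideanSpace ℝ (Fin n))
    (hg : ConvexOn ℝ Set.univ g)
    (hh : ConvexOn ℝ Set.univ h)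
    (hgdiff : ∀ x, HasGradientAt g (g' x) x)
    (xs : EuclideanSpace ℝ (Fin n))
    (hmin : ∀ x, g xs + h xs ≤ g x + h x)
    (lam : ℝ) (hlam : 0 < lam)
    (x ε p q : EuclideanSpace ℝ (Fin n))
    (hp : p ∈ subdiff h (x - ε))
    (hpe : (lam⁻¹) • ε = g' x + p)
    (hq : q ∈ subdiff h x) :
    g x + h x - (g xs + h xs) ≤ ⟪x - xs, (lam⁻¹) • ε⟫ + ⟪ε, q - p⟫ :=
  suboptimality_bound_general g h g' hg hgdiff xs lam x ε p q hp hpe hq
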